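/- Let Ω ⊆ ℝ² be an open set, let u : ℝ² → ℝ be locally integrable on Ω with weak gradient g = (g₁,g₂) on Ω, and let v : ℝ² → ℝ be a smooth (C^∞) function. Suppose w : ℝ² → ℝ is locally integrable on Ω and has weak gradient on Ω equal almost everywhere to (u·∂₁v − v·g₁, u·∂₂v − v·g₂) (i.e. dw = u dv − v du weakly, the Heisenberg contact relation for the triple (u, v, w)). Then g₁(x)·∂₂v(x) − g₂(x)·∂₁v(x) = 0 for Lebesgue-almost every x ∈ Ω; that is, the weak gradient of u and the gradient of v are almost everywhere linearly dependent. -/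

import Mathlib

/-!
Subtracting the Leibniz rule `d(uv) = v du + u dv` from the contact relation
`dw = u dv - v du` gives `d(w - uv) = -2 v du`. The weak curl of a weak gradient vanishes
(second derivatives of test functions commute), so testing the curl of `v du` against `φ` and the
curl of `du` against `v φ` leaves `∫ (∂₁u ∂₂v - ∂₂u ∂₁v) φ = 0` for every test function `φ`,
and the fundamental lemma of the calculus of variations concludes.
-/

open MeasureTheory
open scoped ENNReal

/-- `u ∈ W^{1,1}_loc(Ω)` with weak gradient `(g₁, g₂)`: `u`, `g₁`, `g₂` are locally
integrable on the open set `Ω ⊆ ℝ²` and the integration-by-parts identities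
`∫_Ω u ∂ᵢφ = −∫_Ω gᵢ φ` hold for every smooth `φ` with compact support in `Ω`. -/
def HasWeakGradientOn (u g₁ g₂ : ℝ × ℝ → ℝ) (Ω : Set (ℝ × ℝ)) : Prop :=
  LocallyIntegrableOn u Ω volume ∧
  LocallyIntegrableOn g₁ Ω volume ∧
  LocallyIntegrableOn g₂ Ω volume ∧
  (∀ φ : ℝ × ℝ → ℝ, ContDiff ℝ (⊤ : ℕ∞) φ → HasCompactSupport φ → tsupport φ ⊆ Ω →
    ∫ x in Ω, u x * fderiv ℝ φ x (1, 0) = -∫ x in Ω, g₁ x * φ x) ∧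
  (∀ φ : ℝ × ℝ → ℝ, ContDiff ℝ (⊤ : ℕ∞) φ → HasCompactSupport φ → tsupport φ ⊆ Ω →
    ∫ x in Ω, u x * fderiv ℝ φ x (0, 1) = -∫ x in Ω, g₂ x * φ x)

open scoped ContDiff

variable {E F : Type*} [NormedAddCommGroup E] [NormedSpace ℝ E]
  [NormedAddCommGroup F] [NormedSpace ℝ F]

theorem ContDiff.fderiv_right_apply {ψ : E → F} (hψ : ContDiff ℝ ∞ ψ) (e : E) :
    ContDiff ℝ ∞ (fun x => fderiv ℝ ψ x e) :=
  (hψ.fderiv_right (m := ∞) (by simp)).clm_apply contDiff_const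

theorem fderiv_fderiv_apply_comm {ψ : E → F} {x : E} (hψ : ContDiffAt ℝ 2 ψ x) (a b : E) :
    fderiv ℝ (fun y => fderiv ℝ ψ y a) x b = fderiv ℝ (fun y => fderiv ℝ ψ y b) x a := by
  have hd : DifferentiableAt ℝ (fderiv ℝ ψ) x :=
    (hψ.fderiv_right (m := 1) le_rfl).differentiableAt one_ne_zero
  have hflip (c : E) : fderiv ℝ (fun y => fderiv ℝ ψ y c) x = (fderiv ℝ (fderiv ℝ ψ) x).flip c := by
    rw [fderiv_clm_apply hd (differentiableAt_const c)]
    simp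
  rw [hflip, hflip]
  exact (hψ.isSymmSndFDerivAt (by simp)).eq b a

theorem fderiv_fun_mul_apply {v φ : E → ℝ} {x : E} (hv : DifferentiableAt ℝ v x)
    (hφ : DifferentiableAt ℝ φ x) (e : E) :
    fderiv ℝ (fun y => v y * φ y) x e = v x * fderiv ℝ φ x e + fderiv ℝ v x e * φ x := by
  simp [fderiv_fun_mul hv hφ, mul_comm]

structure IsTestFunctionOn (Ω : Set E) (φ : E → ℝ) : Prop where
  contDiff : ContDiff ℝ ∞ φ
  hasCompactSupport : HasCompactSupport φ
  tsupport_subset : tsupport φ ⊆ Ω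

namespace IsTestFunctionOn

variable {Ω : Set E} {φ : E → ℝ}

theorem mul_left {v : E → ℝ} (hv : ContDiff ℝ ∞ v) (hφ : IsTestFunctionOn Ω φ) :
    IsTestFunctionOn Ω (fun x => v x * φ x) where
  contDiff := hv.mul hφ.contDiff
  hasCompactSupport := hφ.hasCompactSupport.mul_left
  tsupport_subset := tsupport_mul_subset_right.trans hφ.tsupport_subset

theorem fderiv_apply (hφ : IsTestFunctionOn Ω φ) (e : E) :
    IsTestFunctionOn Ω (fun x => fderiv ℝ φ x e) where
  contDiff := hφ.contDiff.fderiv_right_apply e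
  hasCompactSupport := hφ.hasCompactSupport.fderiv_apply ℝ e
  tsupport_subset := (tsupport_fderiv_apply_subset ℝ e).trans hφ.tsupport_subset

theorem integrableOn_mul [MeasurableSpace E] [OpensMeasurableSpace E] {μ : Measure E}
    {f : E → ℝ} (hf : LocallyIntegrableOn f Ω μ) (hφ : IsTestFunctionOn Ω φ) :
    IntegrableOn (fun x => f x * φ x) Ω μ := by
  have hK := hφ.hasCompactSupport.isCompact
  have hfK : IntegrableOn (fun x => f x * φ x) (tsupport φ) μ :=
    (hf.integrableOn_compact_subset hφ.tsupport_subset hK).mul_continuousOn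
      hφ.contDiff.continuous.continuousOn hK
  refine (integrableOn_iff_integrable_of_support_subset ?_).mp hfK |>.integrableOn
  exact (Function.support_mul_subset_right _ _).trans (subset_tsupport φ)

end IsTestFunctionOn

variable [MeasurableSpace E]

structure HasWeakLineDerivOn (u g : E → ℝ) (e : E) (Ω : Set E) (μ : Measure E) : Prop where
  locallyIntegrableOn : LocallyIntegrableOn u Ω μ
  locallyIntegrableOn_deriv : LocallyIntegrableOn g Ω μ
  integral_mul_fderiv : ∀ φ, IsTestFunctionOn Ω φ →
    ∫ x in Ω, u x * fderiv ℝ φ x e ∂μ = -∫ x in Ω, g x * φ x ∂μ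

theorem HasWeakGradientOn.hasWeakLineDerivOn {u g₁ g₂ : ℝ × ℝ → ℝ} {Ω : Set (ℝ × ℝ)}
    (h : HasWeakGradientOn u g₁ g₂ Ω) :
    HasWeakLineDerivOn u g₁ (1, 0) Ω volume ∧ HasWeakLineDerivOn u g₂ (0, 1) Ω volume :=
  let ⟨hu, hg₁, hg₂, h₁, h₂⟩ := h
  ⟨⟨hu, hg₁, fun φ hφ => h₁ φ hφ.1 hφ.2 hφ.3⟩, ⟨hu, hg₂, fun φ hφ => h₂ φ hφ.1 hφ.2 hφ.3⟩⟩

namespace HasWeakLineDerivOn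

variable {μ : Measure E} {Ω : Set E} {u w g g' : E → ℝ} {e : E}

theorem integral_mul_fderiv_comm {g₁ g₂ : E → ℝ} {e₁ e₂ : E}
    (h₁ : HasWeakLineDerivOn u g₁ e₁ Ω μ) (h₂ : HasWeakLineDerivOn u g₂ e₂ Ω μ)
    {ψ : E → ℝ} (hψ : IsTestFunctionOn Ω ψ) :
    ∫ x in Ω, g₁ x * fderiv ℝ ψ x e₂ ∂μ = ∫ x in Ω, g₂ x * fderiv ℝ ψ x e₁ ∂μ := by
  rw [← neg_inj, ← h₁.integral_mul_fderiv _ (hψ.fderiv_apply e₂),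
    ← h₂.integral_mul_fderiv _ (hψ.fderiv_apply e₁)]
  congr with x
  rw [fderiv_fderiv_apply_comm (hψ.contDiff.contDiffAt.of_le (WithTop.coe_le_coe.mpr le_top))]

variable [OpensMeasurableSpace E]

theorem sub (hu : HasWeakLineDerivOn u g e Ω μ) (hw : HasWeakLineDerivOn w g' e Ω μ) :
    HasWeakLineDerivOn (fun x => u x - w x) (fun x => g x - g' x) e Ω μ where
  locallyIntegrableOn := hu.locallyIntegrableOn.sub hw.locallyIntegrableOn
  locallyIntegrableOn_deriv := hu.locallyIntegrableOn_deriv.sub hw.locallyIntegrableOn_deriv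
  integral_mul_fderiv φ hφ := by
    have hDφ := hφ.fderiv_apply e
    simp only [sub_mul]
    rw [integral_sub (hDφ.integrableOn_mul hu.locallyIntegrableOn)
        (hDφ.integrableOn_mul hw.locallyIntegrableOn),
      integral_sub (hφ.integrableOn_mul hu.locallyIntegrableOn_deriv)
        (hφ.integrableOn_mul hw.locallyIntegrableOn_deriv),
      hu.integral_mul_fderiv φ hφ, hw.integral_mul_fderiv φ hφ]
    ring

theorem mul_contDiff [LocallyCompactSpace E] (hΩ : IsLocallyClosed Ω)
    (hu : HasWeakLineDerivOn u g e Ω μ) {v : E → ℝ} (hv : ContDiff ℝ ∞ v) :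
    HasWeakLineDerivOn (fun x => u x * v x) (fun x => g x * v x + u x * fderiv ℝ v x e) e Ω μ where
  locallyIntegrableOn := hu.locallyIntegrableOn.mul_continuousOn hv.continuous.continuousOn hΩ
  locallyIntegrableOn_deriv :=
    (hu.locallyIntegrableOn_deriv.mul_continuousOn hv.continuous.continuousOn hΩ).add
      (hu.locallyIntegrableOn.mul_continuousOn
        (hv.fderiv_right_apply e).continuous.continuousOn hΩ)
  integral_mul_fderiv φ hφ := by
    have hvφ := hφ.mul_left hv
    have hv'φ := hφ.mul_left (hv.fderiv_right_apply e)
    have hleibniz : ∀ x, u x * v x * fderiv ℝ φ x e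
        = u x * fderiv ℝ (fun y => v y * φ y) x e - u x * (fderiv ℝ v x e * φ x) := fun x => by
      rw [fderiv_fun_mul_apply (hv.differentiable (by simp) x)
        (hφ.contDiff.differentiable (by simp) x)]
      ring
    simp only [hleibniz, add_mul, mul_assoc]
    rw [integral_sub ((hvφ.fderiv_apply e).integrableOn_mul hu.locallyIntegrableOn)
        (hv'φ.integrableOn_mul hu.locallyIntegrableOn),
      integral_add (hvφ.integrableOn_mul hu.locallyIntegrableOn_deriv)
        (hv'φ.integrableOn_mul hu.locallyIntegrableOn),
      hu.integral_mul_fderiv _ hvφ]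
    ring

theorem integral_jacobian_mul_eq_zero [LocallyCompactSpace E] (hΩ : IsLocallyClosed Ω)
    {g₁ g₂ : E → ℝ} {e₁ e₂ : E} (hu₁ : HasWeakLineDerivOn u g₁ e₁ Ω μ)
    (hu₂ : HasWeakLineDerivOn u g₂ e₂ Ω μ) {v : E → ℝ} (hv : ContDiff ℝ ∞ v)
    (hw₁ : HasWeakLineDerivOn w (fun x => u x * fderiv ℝ v x e₁ - v x * g₁ x) e₁ Ω μ)
    (hw₂ : HasWeakLineDerivOn w (fun x => u x * fderiv ℝ v x e₂ - v x * g₂ x) e₂ Ω μ)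
    {φ : E → ℝ} (hφ : IsTestFunctionOn Ω φ) :
    ∫ x in Ω, (g₁ x * fderiv ℝ v x e₂ - g₂ x * fderiv ℝ v x e₁) * φ x ∂μ = 0 := by
  have hv₁φ := hφ.mul_left (hv.fderiv_right_apply e₁)
  have hv₂φ := hφ.mul_left (hv.fderiv_right_apply e₂)
  have hvD₁φ := (hφ.fderiv_apply e₁).mul_left hv
  have hvD₂φ := (hφ.fderiv_apply e₂).mul_left hv
  have hcontact : ∫ x in Ω, g₁ x * (v x * fderiv ℝ φ x e₂) ∂μ
      = ∫ x in Ω, g₂ x * (v x * fderiv ℝ φ x e₁) ∂μ := by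
    -- `w - u v` has weak derivatives `-2 v gᵢ`, and its weak curl vanishes.
    have hz := (hw₁.sub (hu₁.mul_contDiff hΩ hv)).integral_mul_fderiv_comm
      (hw₂.sub (hu₂.mul_contDiff hΩ hv)) hφ
    have hcollect (a b c d : ℝ) : (a - b * c - (c * b + a)) * d = -2 * (c * (b * d)) := by ring
    simp only [hcollect, integral_const_mul] at hz
    linarith
  have hcurl := hu₁.integral_mul_fderiv_comm hu₂ (hφ.mul_left hv)
  simp only [fderiv_fun_mul_apply (hv.differentiable (by simp) _)
    (hφ.contDiff.differentiable (by simp) _), mul_add] at hcurl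
  rw [integral_add (hvD₂φ.integrableOn_mul hu₁.locallyIntegrableOn_deriv)
      (hv₂φ.integrableOn_mul hu₁.locallyIntegrableOn_deriv),
    integral_add (hvD₁φ.integrableOn_mul hu₂.locallyIntegrableOn_deriv)
      (hv₁φ.integrableOn_mul hu₂.locallyIntegrableOn_deriv)] at hcurl
  simp only [sub_mul, mul_assoc]
  rw [integral_sub (hv₂φ.integrableOn_mul hu₁.locallyIntegrableOn_deriv)
    (hv₁φ.integrableOn_mul hu₂.locallyIntegrableOn_deriv)]
  linarith

end HasWeakLineDerivOn

theorem IsOpen.ae_restrict_eq_zero_of_forall_integral_mul_eq_zero [FiniteDimensional ℝ E]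
    [BorelSpace E] {μ : Measure E} {Ω : Set E} (hΩ : IsOpen Ω) {f : E → ℝ}
    (hf : LocallyIntegrableOn f Ω μ)
    (h : ∀ φ, IsTestFunctionOn Ω φ → ∫ x in Ω, f x * φ x ∂μ = 0) :
    ∀ᵐ x ∂μ.restrict Ω, f x = 0 := by
  rw [ae_restrict_iff' hΩ.measurableSet]
  refine hΩ.ae_eq_zero_of_integral_contDiff_smul_eq_zero hf fun φ hφ hφc hφΩ => ?_
  rw [← setIntegral_eq_integral_of_forall_compl_eq_zero fun x hx => ?_]
  · simpa only [smul_eq_mul, mul_comm] using h φ ⟨hφ, hφc, hφΩ⟩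
  · rw [image_eq_zero_of_notMem_tsupport fun hx' => hx (hφΩ hx'), zero_smul]

/-- If `u ∈ W^{1,1}_loc(Ω)` has weak gradient `g`, `v` is smooth, and some `w` has weak
gradient `u ∇v − v g` on `Ω` (the Heisenberg contact relation `dw = u dv − v du`), then
`g₁ ∂₂v − g₂ ∂₁v = 0` a.e. on `Ω`: the weak gradient of `u` and the gradient of `v` are
almost everywhere linearly dependent. -/
theorem contact_relation_implies_dependent_gradients
    (Ω : Set (ℝ × ℝ)) (hΩ : IsOpen Ω)
    (u g₁ g₂ : ℝ × ℝ → ℝ) (hu : HasWeakGradientOn u g₁ g₂ Ω)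
    (v : ℝ × ℝ → ℝ) (hv : ContDiff ℝ (⊤ : ℕ∞) v)
    (w : ℝ × ℝ → ℝ)
    (hw : HasWeakGradientOn w
      (fun x => u x * fderiv ℝ v x (1, 0) - v x * g₁ x)
      (fun x => u x * fderiv ℝ v x (0, 1) - v x * g₂ x) Ω) :
    ∀ᵐ x ∂(volume.restrict Ω),
      g₁ x * fderiv ℝ v x (0, 1) - g₂ x * fderiv ℝ v x (1, 0) = 0 := by
  obtain ⟨hu₁, hu₂⟩ := hu.hasWeakLineDerivOn
  obtain ⟨hw₁, hw₂⟩ := hw.hasWeakLineDerivOn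
  have hjac : LocallyIntegrableOn
      (fun x => g₁ x * fderiv ℝ v x (0, 1) - g₂ x * fderiv ℝ v x (1, 0)) Ω volume :=
    (hu₁.locallyIntegrableOn_deriv.mul_continuousOn
        (hv.fderiv_right_apply _).continuous.continuousOn hΩ.isLocallyClosed).sub
      (hu₂.locallyIntegrableOn_deriv.mul_continuousOn
        (hv.fderiv_right_apply _).continuous.continuousOn hΩ.isLocallyClosed)
  exact hΩ.ae_restrict_eq_zero_of_forall_integral_mul_eq_zero hjac fun φ hφ =>
    HasWeakLineDerivOn.integral_jacobian_mul_eq_zero hΩ.isLocallyClosed hu₁ hu₂ hv hw₁ hw₂ hφ
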